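/- arXiv:physics/9801008 — 8 statements merged into one kernel-verified Lean document; each statement's English description precedes it below -/
import Mathlib

section
/- Every 2-cocycle ξ on su_ω(N+1) satisfies ω_k·ξ(B_k,B_l) = 0 and ω_l·ξ(B_k,B_l) = 0 for all 1 ≤ k < l ≤ N. -/
open Finset

noncomputable section

/-- `ckW ω a b` is the product `ω_{ab} = ω_{a+1} ω_{a+2} ⋯ ω_b` (so `ckW ω a a = 1`). -/
def ckW (ω : ℕ → ℝ) (a b : ℕ) : ℝ := ∏ s ∈ Finset.Icc (a + 1) b, ω s

/-- `ckKappa a b l = δ_{a,l-1} − δ_{b,l-1} + δ_{b,l} − δ_{a,l}`. -/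
def ckKappa (a b l : ℕ) : ℝ :=
  (if a = l - 1 then (1 : ℝ) else 0) - (if b = l - 1 then (1 : ℝ) else 0)
    + (if b = l then (1 : ℝ) else 0) - (if a = l then (1 : ℝ) else 0)

/-- A 2-cocycle on a real Lie algebra: an alternating bilinear form satisfying the
cocycle identity. -/
def IsLieCocycle {L : Type*} [LieRing L] [LieAlgebra ℝ L]
    (ξ : L →ₗ[ℝ] L →ₗ[ℝ] ℝ) : Prop :=
  (∀ x, ξ x x = 0) ∧ ∀ x y z, ξ ⁅x, y⁆ z + ξ ⁅y, z⁆ x + ξ ⁅z, x⁆ y = 0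

/-- A 2-coboundary on a real Lie algebra: the bilinear form `(x, y) ↦ μ ⁅x, y⁆` for a
linear functional `μ`. -/
def IsLieCoboundary {L : Type*} [LieRing L] [LieAlgebra ℝ L]
    (ξ : L →ₗ[ℝ] L →ₗ[ℝ] ℝ) : Prop :=
  ∃ μ : L →ₗ[ℝ] ℝ, ∀ x y, ξ x y = μ ⁅x, y⁆

/-- The commutation relations of the special unitary Cayley–Klein algebra `su_ω(N+1)`
for the generating family `J, M, B`. -/
structure SUBrackets {L : Type*} [LieRing L] [LieAlgebra ℝ L] (N : ℕ) (ω : ℕ → ℝ)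
    (J M : ℕ → ℕ → L) (B : ℕ → L) : Prop where
  jj_left : ∀ a b c, a < b → b < c → c ≤ N → ⁅J a b, J a c⁆ = ckW ω a b • J b c
  jj_mid : ∀ a b c, a < b → b < c → c ≤ N → ⁅J a b, J b c⁆ = -(J a c)
  jj_right : ∀ a b c, a < b → b < c → c ≤ N → ⁅J a c, J b c⁆ = ckW ω b c • J a b
  mm_left : ∀ a b c, a < b → b < c → c ≤ N → ⁅M a b, M a c⁆ = ckW ω a b • J b c
  mm_mid : ∀ a b c, a < b → b < c → c ≤ N → ⁅M a b, M b c⁆ = J a c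
  mm_right : ∀ a b c, a < b → b < c → c ≤ N → ⁅M a c, M b c⁆ = ckW ω b c • J a b
  jm_left : ∀ a b c, a < b → b < c → c ≤ N → ⁅J a b, M a c⁆ = ckW ω a b • M b c
  jm_mid : ∀ a b c, a < b → b < c → c ≤ N → ⁅J a b, M b c⁆ = -(M a c)
  jm_right : ∀ a b c, a < b → b < c → c ≤ N → ⁅J a c, M b c⁆ = -(ckW ω b c • M a b)
  mj_left : ∀ a b c, a < b → b < c → c ≤ N → ⁅M a b, J a c⁆ = -(ckW ω a b • M b c)
  mj_mid : ∀ a b c, a < b → b < c → c ≤ N → ⁅M a b, J b c⁆ = -(M a c)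
  mj_right : ∀ a b c, a < b → b < c → c ≤ N → ⁅M a c, J b c⁆ = ckW ω b c • M a b
  jj_disj : ∀ a b d e, a < b → b ≤ N → d < e → e ≤ N →
    a ≠ d → a ≠ e → b ≠ d → b ≠ e → ⁅J a b, J d e⁆ = 0
  mm_disj : ∀ a b d e, a < b → b ≤ N → d < e → e ≤ N →
    a ≠ d → a ≠ e → b ≠ d → b ≠ e → ⁅M a b, M d e⁆ = 0
  jm_disj : ∀ a b d e, a < b → b ≤ N → d < e → e ≤ N →
    a ≠ d → a ≠ e → b ≠ d → b ≠ e → ⁅J a b, M d e⁆ = 0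
  jb : ∀ a b l, a < b → b ≤ N → 1 ≤ l → l ≤ N → ⁅J a b, B l⁆ = ckKappa a b l • M a b
  mb : ∀ a b l, a < b → b ≤ N → 1 ≤ l → l ≤ N → ⁅M a b, B l⁆ = -(ckKappa a b l • J a b)
  jm_same : ∀ a b, a < b → b ≤ N →
    ⁅J a b, M a b⁆ = (-(2 * ckW ω a b)) • ∑ s ∈ Finset.Icc (a + 1) b, B s
  bb : ∀ k l, 1 ≤ k → k < l → l ≤ N → ⁅B k, B l⁆ = 0

/-- Index predicate for the basis of `su_ω(N+1)`. -/
def suIdxP (N : ℕ) : (ℕ × ℕ) ⊕ ((ℕ × ℕ) ⊕ ℕ) → Prop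
  | Sum.inl (a, b) => a < b ∧ b ≤ N
  | Sum.inr (Sum.inl (a, b)) => a < b ∧ b ≤ N
  | Sum.inr (Sum.inr l) => 1 ≤ l ∧ l ≤ N

/-- Index type for the basis of `su_ω(N+1)`. -/
def SUIdx (N : ℕ) : Type := {x // suIdxP N x}

/-- The basis family `{J_{ab}} ∪ {M_{ab}} ∪ {B_l}` of `su_ω(N+1)`. -/
def suFam {L : Type*} (N : ℕ) (J M : ℕ → ℕ → L) (B : ℕ → L) : SUIdx N → L :=
  fun x =>
    match x.1 with
    | Sum.inl (a, b) => J a b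
    | Sum.inr (Sum.inl (a, b)) => M a b
    | Sum.inr (Sum.inr l) => B l

/-- The family `{J_{ab}} ∪ {M_{ab}} ∪ {B_l}` is a basis of `L`. -/
def SUBasis {L : Type*} [LieRing L] [LieAlgebra ℝ L] (N : ℕ)
    (J M : ℕ → ℕ → L) (B : ℕ → L) : Prop :=
  LinearIndependent ℝ (suFam N J M B) ∧
    ⊤ ≤ Submodule.span ℝ (Set.range (suFam N J M B))

/-- The extra central generator `I` of `u_ω(N+1)` commutes with everything. -/
structure UCentral {L : Type*} [LieRing L] [LieAlgebra ℝ L] (N : ℕ)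
    (J M : ℕ → ℕ → L) (B : ℕ → L) (I : L) : Prop where
  jcen : ∀ a b, a < b → b ≤ N → ⁅J a b, I⁆ = 0
  mcen : ∀ a b, a < b → b ≤ N → ⁅M a b, I⁆ = 0
  bcen : ∀ l, 1 ≤ l → l ≤ N → ⁅B l, I⁆ = 0

/-- Index type for the basis of `u_ω(N+1)`. -/
def UIdx (N : ℕ) : Type := SUIdx N ⊕ Unit

/-- The basis family `{J_{ab}} ∪ {M_{ab}} ∪ {B_l} ∪ {I}` of `u_ω(N+1)`. -/
def uFam {L : Type*} (N : ℕ) (J M : ℕ → ℕ → L) (B : ℕ → L) (I : L) : UIdx N → L :=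
  Sum.elim (suFam N J M B) fun _ => I

/-- The family `{J_{ab}} ∪ {M_{ab}} ∪ {B_l} ∪ {I}` is a basis of `L`. -/
def UBasis {L : Type*} [LieRing L] [LieAlgebra ℝ L] (N : ℕ)
    (J M : ℕ → ℕ → L) (B : ℕ → L) (I : L) : Prop :=
  LinearIndependent ℝ (uFam N J M B I) ∧
    ⊤ ≤ Submodule.span ℝ (Set.range (uFam N J M B I))

theorem su_cocycle_BB_constraint {L : Type*} [LieRing L] [LieAlgebra ℝ L]
    (N : ℕ) (hN : 1 ≤ N) (ω : ℕ → ℝ) (J M : ℕ → ℕ → L) (B : ℕ → L)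
    (hbr : SUBrackets N ω J M B) (hbasis : SUBasis N J M B)
    (ξ : L →ₗ[ℝ] L →ₗ[ℝ] ℝ) (hξ : IsLieCocycle ξ) :
    ∀ k l, 1 ≤ k → k < l → l ≤ N →
      ω k * ξ (B k) (B l) = 0 ∧ ω l * ξ (B k) (B l) = 0 := by
  obtain ⟨halt, hcoc⟩ := hξ
  have skew : ∀ x y : L, ξ x y = -ξ y x := by
    intro x y
    have h := halt (x + y)
    simp only [map_add, LinearMap.add_apply, halt x, halt y] at h
    linarith
  intro k l hk hkl hlN
  have hkN : k ≤ N := le_of_lt (lt_of_lt_of_le hkl hlN)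
  have hl1 : 1 ≤ l := le_trans hk (le_of_lt hkl)
  have key : ∀ m n, 1 ≤ m → m ≤ N → 1 ≤ n → n ≤ N →
      ω m * ξ (B m) (B n) = 0 := by
    intro m n hm hmN hn hnN
    have hm1 : m - 1 < m := Nat.sub_lt hm one_pos
    have hcw : ckW ω (m - 1) m = ω m := by
      simp [ckW, Nat.sub_add_cancel hm]
    have hJM := hbr.jm_same (m - 1) m hm1 hmN
    rw [hcw, Nat.sub_add_cancel hm, Finset.Icc_self, Finset.sum_singleton] at hJM
    have hMB := hbr.mb (m - 1) m n hm1 hmN hn hnN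
    have hJB := hbr.jb (m - 1) m n hm1 hmN hn hnN
    have hBJ : ⁅B n, J (m - 1) m⁆ = -(ckKappa (m - 1) m n • M (m - 1) m) := by
      rw [← lie_skew, hJB]
    have h := hcoc (J (m - 1) m) (M (m - 1) m) (B n)
    rw [hJM, hMB, hBJ] at h
    simp only [map_smul, map_neg, LinearMap.smul_apply, LinearMap.neg_apply,
      smul_eq_mul, halt, mul_zero, neg_zero, add_zero] at h
    linarith
  refine ⟨key k l hk hkN hl1 hlN, ?_⟩
  have h2 := key l k hl1 hlN hk hkN
  rw [skew (B l) (B k)] at h2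
  linarith
end
end

section
/- Let ξ be any 2-cocycle on su_ω(N+1) and let a < b and d < e be index pairs in {0,…,N} with {a,b} ∩ {d,e} = ∅. Then ξ(J_{ab},J_{de}) = 0, ξ(M_{ab},M_{de}) = 0, ξ(J_{ab},M_{de}) = 0 and ξ(M_{ab},J_{de}) = 0. -/
open Finset

noncomputable section

lemma cocycle_antisymm' {L : Type*} [LieRing L] [LieAlgebra ℝ L]
    (ξ : L →ₗ[ℝ] L →ₗ[ℝ] ℝ) (hξ : IsLieCocycle ξ) (x y : L) : ξ x y = - ξ y x := by
  have h := hξ.1 (x + y)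
  have hx := hξ.1 x
  have hy := hξ.1 y
  simp only [map_add, LinearMap.add_apply] at h
  linarith

lemma solve_pair (p1 q1 p2 q2 A B : ℝ)
    (h : p1 * q2 ≠ p2 * q1 ∨ p1 ^ 2 ≠ q1 ^ 2 ∨ p2 ^ 2 ≠ q2 ^ 2)
    (e1 : p1 * A + q1 * B = 0) (e2 : q1 * A + p1 * B = 0)
    (e3 : p2 * A + q2 * B = 0) (e4 : q2 * A + p2 * B = 0) : A = 0 ∧ B = 0 := by
  rcases h with h | h | h
  · have hA : (p1 * q2 - p2 * q1) * A = 0 := by ring_nf; linear_combination q2 * e1 - q1 * e3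
    have hB : (p1 * q2 - p2 * q1) * B = 0 := by ring_nf; linear_combination p1 * e3 - p2 * e1
    have hd : p1 * q2 - p2 * q1 ≠ 0 := sub_ne_zero.mpr h
    exact ⟨by rcases mul_eq_zero.mp hA with h' | h'; exact absurd h' hd; exact h',
           by rcases mul_eq_zero.mp hB with h' | h'; exact absurd h' hd; exact h'⟩
  · have hA : (p1 ^ 2 - q1 ^ 2) * A = 0 := by linear_combination p1 * e1 - q1 * e2
    have hB : (p1 ^ 2 - q1 ^ 2) * B = 0 := by linear_combination p1 * e2 - q1 * e1
    have hd : p1 ^ 2 - q1 ^ 2 ≠ 0 := sub_ne_zero.mpr h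
    exact ⟨by rcases mul_eq_zero.mp hA with h' | h'; exact absurd h' hd; exact h',
           by rcases mul_eq_zero.mp hB with h' | h'; exact absurd h' hd; exact h'⟩
  · have hA : (p2 ^ 2 - q2 ^ 2) * A = 0 := by linear_combination p2 * e3 - q2 * e4
    have hB : (p2 ^ 2 - q2 ^ 2) * B = 0 := by linear_combination p2 * e4 - q2 * e3
    have hd : p2 ^ 2 - q2 ^ 2 ≠ 0 := sub_ne_zero.mpr h
    exact ⟨by rcases mul_eq_zero.mp hA with h' | h'; exact absurd h' hd; exact h',
           by rcases mul_eq_zero.mp hB with h' | h'; exact absurd h' hd; exact h'⟩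

lemma kappa_rank (a b d e : ℕ) (hab : a < b) (hde : d < e)
    (had : a ≠ d) (hae : a ≠ e) (hbd : b ≠ d) (hbe : b ≠ e) :
    ckKappa d e b * ckKappa a b e ≠ ckKappa d e e * ckKappa a b b ∨
      ckKappa d e b ^ 2 ≠ ckKappa a b b ^ 2 ∨
      ckKappa d e e ^ 2 ≠ ckKappa a b e ^ 2 := by
  have h1 : ¬ (b = b - 1) := by omega
  have h2 : ¬ (e = e - 1) := by omega
  have h3 : ¬ (a = b) := by omega
  have h4 : ¬ (d = e) := by omega
  have h5 : ¬ (e = b) := fun h => hbe h.symm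
  have h6 : ¬ (d = b) := fun h => hbd h.symm
  have h7 : ¬ (a = e) := hae
  have h8 : ¬ (b = e) := hbe
  simp only [ckKappa, h1, h2, h3, h4, h5, h6, h7, h8, if_false, if_true, if_neg, if_pos,
    reduceIte]
  split_ifs <;> first | (exfalso; omega) | norm_num

theorem su_cocycle_disjoint_vanish {L : Type*} [LieRing L] [LieAlgebra ℝ L]
    (N : ℕ) (hN : 1 ≤ N) (ω : ℕ → ℝ) (J M : ℕ → ℕ → L) (B : ℕ → L)
    (hbr : SUBrackets N ω J M B) (hbasis : SUBasis N J M B)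
    (ξ : L →ₗ[ℝ] L →ₗ[ℝ] ℝ) (hξ : IsLieCocycle ξ)
    (a b d e : ℕ) (hab : a < b) (hbN : b ≤ N) (hde : d < e) (heN : e ≤ N)
    (had : a ≠ d) (hae : a ≠ e) (hbd : b ≠ d) (hbe : b ≠ e) :
    ξ (J a b) (J d e) = 0 ∧ ξ (M a b) (M d e) = 0 ∧
      ξ (J a b) (M d e) = 0 ∧ ξ (M a b) (J d e) = 0 := by
  have anti := cocycle_antisymm' ξ hξ
  have hda : d ≠ a := had.symm
  have hdb : d ≠ b := hbd.symm
  have hea : e ≠ a := hae.symm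
  have heb : e ≠ b := hbe.symm
  -- for each admissible l, four linear equations
  have quad : ∀ l, 1 ≤ l → l ≤ N →
      (ckKappa d e l * ξ (J a b) (M d e) + ckKappa a b l * ξ (M a b) (J d e) = 0 ∧
       ckKappa a b l * ξ (J a b) (M d e) + ckKappa d e l * ξ (M a b) (J d e) = 0 ∧
       ckKappa d e l * ξ (J a b) (J d e) + ckKappa a b l * (-(ξ (M a b) (M d e))) = 0 ∧
       ckKappa a b l * ξ (J a b) (J d e) + ckKappa d e l * (-(ξ (M a b) (M d e))) = 0) := by
    intro l hl1 hlN
    have hJdeB : ⁅J d e, B l⁆ = ckKappa d e l • M d e := hbr.jb d e l hde heN hl1 hlN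
    have hJabB : ⁅J a b, B l⁆ = ckKappa a b l • M a b := hbr.jb a b l hab hbN hl1 hlN
    have hMdeB : ⁅M d e, B l⁆ = -(ckKappa d e l • J d e) := hbr.mb d e l hde heN hl1 hlN
    have hMabB : ⁅M a b, B l⁆ = -(ckKappa a b l • J a b) := hbr.mb a b l hab hbN hl1 hlN
    have hBJab : ⁅B l, J a b⁆ = -(ckKappa a b l • M a b) := by
      rw [← lie_skew, hJabB]
    have hBMab : ⁅B l, M a b⁆ = ckKappa a b l • J a b := by
      rw [← lie_skew, hMabB]; simp
    have hJJ : ⁅J a b, J d e⁆ = 0 := hbr.jj_disj a b d e hab hbN hde heN had hae hbd hbe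
    have hMM : ⁅M a b, M d e⁆ = 0 := hbr.mm_disj a b d e hab hbN hde heN had hae hbd hbe
    have hJM : ⁅J a b, M d e⁆ = 0 := hbr.jm_disj a b d e hab hbN hde heN had hae hbd hbe
    have hMJ : ⁅M a b, J d e⁆ = 0 := by
      rw [← lie_skew, hbr.jm_disj d e a b hde heN hab hbN hda hdb hea heb, neg_zero]
    have c1 := hξ.2 (J a b) (J d e) (B l)
    rw [hJJ, hJdeB, hBJab] at c1
    have c2 := hξ.2 (M a b) (M d e) (B l)
    rw [hMM, hMdeB, hBMab] at c2
    have c3 := hξ.2 (J a b) (M d e) (B l)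
    rw [hJM, hMdeB, hBJab] at c3
    have c4 := hξ.2 (M a b) (J d e) (B l)
    rw [hMJ, hJdeB, hBMab] at c4
    simp only [map_zero, map_neg, map_smul, LinearMap.zero_apply, LinearMap.neg_apply,
      LinearMap.smul_apply, smul_eq_mul, zero_add, add_zero] at c1 c2 c3 c4
    have a1 : ξ (M d e) (J a b) = -(ξ (J a b) (M d e)) := anti _ _
    have a2 : ξ (J d e) (M a b) = -(ξ (M a b) (J d e)) := anti _ _
    have a3 : ξ (J d e) (J a b) = -(ξ (J a b) (J d e)) := anti _ _
    have a4 : ξ (M d e) (M a b) = -(ξ (M a b) (M d e)) := anti _ _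
    rw [a1] at c1
    rw [a2] at c2
    rw [a3] at c3
    rw [a4] at c4
    refine ⟨by linear_combination -c1, by linear_combination c2,
      by linear_combination c3, by linear_combination c4⟩
  have hb1 : 1 ≤ b := by omega
  have he1 : 1 ≤ e := by omega
  obtain ⟨e1, e2, e3, e4⟩ := quad b hb1 hbN
  obtain ⟨f1, f2, f3, f4⟩ := quad e he1 heN
  have hrank := kappa_rank a b d e hab hde had hae hbd hbe
  have hUV := solve_pair (ckKappa d e b) (ckKappa a b b) (ckKappa d e e) (ckKappa a b e)
    (ξ (J a b) (M d e)) (ξ (M a b) (J d e)) hrank e1 e2 f1 f2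
  have hXY := solve_pair (ckKappa d e b) (ckKappa a b b) (ckKappa d e e) (ckKappa a b e)
    (ξ (J a b) (J d e)) (-(ξ (M a b) (M d e))) hrank e3 e4 f3 f4
  exact ⟨hXY.1, by linarith [hXY.2], hUV.1, hUV.2⟩
end
end

section
/- Let ξ be any 2-cocycle on su_ω(N+1), let 0 ≤ a < b ≤ N and let j ∈ {1,…,N} with j ∉ {a, a+1, b, b+1}. Then ξ(J_{ab},B_j) = 0 and ξ(M_{ab},B_j) = 0. -/
open Finset

noncomputable section

theorem su_cocycle_JB_far_vanish {L : Type*} [LieRing L] [LieAlgebra ℝ L]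
    (N : ℕ) (hN : 1 ≤ N) (ω : ℕ → ℝ) (J M : ℕ → ℕ → L) (B : ℕ → L)
    (hbr : SUBrackets N ω J M B) (hbasis : SUBasis N J M B)
    (ξ : L →ₗ[ℝ] L →ₗ[ℝ] ℝ) (hξ : IsLieCocycle ξ)
    (a b j : ℕ) (hab : a < b) (hbN : b ≤ N) (hj1 : 1 ≤ j) (hjN : j ≤ N)
    (hja : j ≠ a) (hja1 : j ≠ a + 1) (hjb : j ≠ b) (hjb1 : j ≠ b + 1) :
    ξ (J a b) (B j) = 0 ∧ ξ (M a b) (B j) = 0 := by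
  have hb1 : 1 ≤ b := by omega
  have hk0 : ckKappa a b j = 0 := by
    unfold ckKappa
    have h1 : a ≠ j - 1 := by omega
    have h2 : b ≠ j - 1 := by omega
    simp [h1, h2, hja.symm, hjb.symm]
  have hkb : ckKappa a b b ≠ 0 := by
    unfold ckKappa
    have h2 : b ≠ b - 1 := by omega
    have h3 : a ≠ b := hab.ne
    by_cases h : a = b - 1 <;> simp [h, h2, h2.symm, h3] <;> norm_num
  have hJBj : ⁅J a b, B j⁆ = 0 := by
    rw [hbr.jb a b j hab hbN hj1 hjN, hk0, zero_smul]
  have hMBj : ⁅M a b, B j⁆ = 0 := by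
    rw [hbr.mb a b j hab hbN hj1 hjN, hk0, zero_smul, neg_zero]
  have hBB : ⁅B b, B j⁆ = (0 : L) := by
    rcases lt_or_gt_of_ne (Ne.symm hjb) with h | h
    · exact hbr.bb b j hb1 h hjN
    · rw [← lie_skew, hbr.bb j b hj1 h hbN, neg_zero]
  have hMB : ξ (M a b) (B j) = 0 := by
    have hc := hξ.2 (J a b) (B b) (B j)
    rw [hbr.jb a b b hab hbN hb1 hbN, hBB, ← lie_skew, hJBj] at hc
    simp only [neg_zero, map_zero, LinearMap.zero_apply, add_zero, map_smul,
      LinearMap.smul_apply, smul_eq_mul] at hc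
    exact (mul_eq_zero.mp hc).resolve_left hkb
  have hJB : ξ (J a b) (B j) = 0 := by
    have hc := hξ.2 (M a b) (B b) (B j)
    rw [hbr.mb a b b hab hbN hb1 hbN, hBB, ← lie_skew, hMBj] at hc
    simp only [neg_zero, map_zero, map_neg, LinearMap.zero_apply, add_zero, map_smul,
      LinearMap.smul_apply, smul_eq_mul, LinearMap.neg_apply, neg_eq_zero] at hc
    exact (mul_eq_zero.mp hc).resolve_left hkb
  exact ⟨hJB, hMB⟩
end
end

section
/- For every 2-cocycle ξ on su_ω(N+1) and every pair 0 ≤ a < b ≤ N there exist real numbers τ_{ab} and η_{ab} such that for all l ∈ {1,…,N}: ξ(J_{ab},B_l) = κ_{ab,l}·τ_{ab} and ξ(M_{ab},B_l) = −κ_{ab,l}·η_{ab}, where κ_{ab,l} = δ_{a,l−1} − δ_{b,l−1} + δ_{b,l} − δ_{a,l}. (Equivalently, the values ξ(J_{ab},B_l) for l ∈ {a, a+1, b, b+1} ∩ {1,…,N} all coincide up to the sign of κ_{ab,l}, and similarly for ξ(M_{ab},B_l).) -/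
open Finset

noncomputable section

theorem su_cocycle_JB_basic {L : Type*} [LieRing L] [LieAlgebra ℝ L]
    (N : ℕ) (hN : 1 ≤ N) (ω : ℕ → ℝ) (J M : ℕ → ℕ → L) (B : ℕ → L)
    (hbr : SUBrackets N ω J M B) (hbasis : SUBasis N J M B)
    (ξ : L →ₗ[ℝ] L →ₗ[ℝ] ℝ) (hξ : IsLieCocycle ξ)
    (a b : ℕ) (hab : a < b) (hbN : b ≤ N) :
    ∃ τab ηab : ℝ, ∀ l, 1 ≤ l → l ≤ N →
      ξ (J a b) (B l) = ckKappa a b l * τab ∧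
        ξ (M a b) (B l) = -(ckKappa a b l * ηab) := by
  have hb1 : 1 ≤ b := by omega
  have hbB : ∀ l, 1 ≤ l → l ≤ N → ⁅B l, B b⁆ = (0 : L) := by
    intro l hl1 hlN
    rcases lt_trichotomy l b with h | h | h
    · exact hbr.bb l b hl1 h hbN
    · subst h; exact lie_self _
    · rw [← lie_skew, hbr.bb b l hb1 h hlN, neg_zero]
  have hκb : ckKappa a b b ≠ 0 := by
    unfold ckKappa
    split_ifs with h1 h2 h3 h4 <;> first | omega | norm_num
  refine ⟨ξ (J a b) (B b) / ckKappa a b b, -(ξ (M a b) (B b)) / ckKappa a b b,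
    fun l hl1 hlN => ?_⟩
  constructor
  · have h1 := hξ.2 (M a b) (B l) (B b)
    rw [hbr.mb a b l hab hbN hl1 hlN, hbB l hl1 hlN, ← lie_skew,
      hbr.mb a b b hab hbN hb1 hbN] at h1
    simp only [map_neg, map_smul, LinearMap.neg_apply, LinearMap.smul_apply,
      map_zero, LinearMap.zero_apply, neg_neg, smul_eq_mul] at h1
    field_simp
    linarith
  · have h1 := hξ.2 (J a b) (B l) (B b)
    rw [hbr.jb a b l hab hbN hl1 hlN, hbB l hl1 hlN, ← lie_skew,
      hbr.jb a b b hab hbN hb1 hbN] at h1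
    simp only [map_neg, map_smul, LinearMap.neg_apply, LinearMap.smul_apply,
      map_zero, LinearMap.zero_apply, smul_eq_mul] at h1
    field_simp
    linarith
end
end

section
/- Let ξ be any 2-cocycle on su_ω(N+1) and let 0 ≤ a < b < c ≤ N. Then ξ(J_{ab},J_{bc}) = −ξ(M_{ab},M_{bc}) = ξ(M_{ac},B_{a+1}), and ξ(J_{ab},M_{bc}) = ξ(M_{ab},J_{bc}) = −ξ(J_{ac},B_{a+1}). In particular the values ξ(J_{ab},J_{bc}), ξ(M_{ab},M_{bc}), ξ(J_{ab},M_{bc}) and ξ(M_{ab},J_{bc}) depend only on the outer indices a and c, not on the middle index b. -/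
open Finset

noncomputable section

lemma su_quad_aux {L : Type*} [LieRing L] [LieAlgebra ℝ L]
    (N : ℕ) (ω : ℕ → ℝ) (J M : ℕ → ℕ → L) (B : ℕ → L)
    (hbr : SUBrackets N ω J M B)
    (ξ : L →ₗ[ℝ] L →ₗ[ℝ] ℝ) (hξ : IsLieCocycle ξ)
    (a b c : ℕ) (hab : a < b) (hbc : b < c) (hcN : c ≤ N) :
    ξ (J a b) (J b c) = ξ (M a c) (B (a + 1)) ∧
    ξ (M a b) (M b c) = -(ξ (M a c) (B (a + 1))) ∧
    ξ (J a b) (M b c) = -(ξ (J a c) (B (a + 1))) ∧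
    ξ (M a b) (J b c) = -(ξ (J a c) (B (a + 1))) := by
  obtain ⟨halt, coc⟩ := hξ
  have skew : ∀ x y : L, ξ x y = -(ξ y x) := by
    intro x y
    have h := halt (x + y)
    simp only [map_add, LinearMap.add_apply, halt x, halt y] at h
    linarith
  have hbN : b ≤ N := le_of_lt (lt_of_lt_of_le hbc hcN)
  have h1 : 1 ≤ a + 1 := by omega
  have hlN : a + 1 ≤ N := by omega
  have hJabB := hbr.jb a b (a+1) hab hbN h1 hlN
  have hJbcB := hbr.jb b c (a+1) hbc hcN h1 hlN
  have hMabB := hbr.mb a b (a+1) hab hbN h1 hlN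
  have hMbcB := hbr.mb b c (a+1) hbc hcN h1 hlN
  have hBJab : ⁅B (a+1), J a b⁆ = -(ckKappa a b (a+1) • M a b) := by
    rw [← lie_skew, hJabB]
  have hBMab : ⁅B (a+1), M a b⁆ = ckKappa a b (a+1) • J a b := by
    rw [← lie_skew, hMabB, neg_neg]
  have E1 := coc (J a b) (J b c) (B (a+1))
  rw [hbr.jj_mid a b c hab hbc hcN, hJbcB, hBJab] at E1
  have E2 := coc (M a b) (M b c) (B (a+1))
  rw [hbr.mm_mid a b c hab hbc hcN, hMbcB, hBMab] at E2
  have E3 := coc (J a b) (M b c) (B (a+1))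
  rw [hbr.jm_mid a b c hab hbc hcN, hMbcB, hBJab] at E3
  have E4 := coc (M a b) (J b c) (B (a+1))
  rw [hbr.mj_mid a b c hab hbc hcN, hJbcB, hBMab] at E4
  simp only [map_neg, map_smul, LinearMap.neg_apply, LinearMap.smul_apply,
    smul_eq_mul] at E1 E2 E3 E4
  have s1 := skew (M b c) (J a b)
  have s2 := skew (J b c) (M a b)
  have s3 := skew (J b c) (J a b)
  have s4 := skew (M b c) (M a b)
  have hba : b ≠ a := by omega
  have haa : a ≠ a + 1 := by omega
  have hca : c ≠ a + 1 := by omega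
  have hcb : c ≠ a := by omega
  rcases eq_or_ne b (a+1) with hb | hb
  · have k1 : ckKappa a b (a+1) = 2 := by
      simp [ckKappa, hb, hba, haa]; norm_num
    have k2 : ckKappa b c (a+1) = -1 := by
      simp [ckKappa, hb, hba, hca, hcb]
    rw [k1, k2] at E1 E2 E3 E4
    refine ⟨by linarith, by linarith, by linarith, by linarith⟩
  · have k1 : ckKappa a b (a+1) = 1 := by
      simp [ckKappa, hb, hba, haa]
    have k2 : ckKappa b c (a+1) = 0 := by
      simp [ckKappa, hb, hba, hca, hcb]
    rw [k1, k2] at E1 E2 E3 E4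
    refine ⟨by linarith, by linarith, by linarith, by linarith⟩

theorem su_cocycle_middle_index {L : Type*} [LieRing L] [LieAlgebra ℝ L]
    (N : ℕ) (hN : 1 ≤ N) (ω : ℕ → ℝ) (J M : ℕ → ℕ → L) (B : ℕ → L)
    (hbr : SUBrackets N ω J M B) (hbasis : SUBasis N J M B)
    (ξ : L →ₗ[ℝ] L →ₗ[ℝ] ℝ) (hξ : IsLieCocycle ξ)
    (a b c : ℕ) (hab : a < b) (hbc : b < c) (hcN : c ≤ N) :
    (ξ (J a b) (J b c) = -(ξ (M a b) (M b c)) ∧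
      ξ (J a b) (J b c) = ξ (M a c) (B (a + 1)) ∧
      ξ (J a b) (M b c) = ξ (M a b) (J b c) ∧
      ξ (J a b) (M b c) = -(ξ (J a c) (B (a + 1)))) ∧
    (∀ b', a < b' → b' < c →
      ξ (J a b) (J b c) = ξ (J a b') (J b' c) ∧
      ξ (M a b) (M b c) = ξ (M a b') (M b' c) ∧
      ξ (J a b) (M b c) = ξ (J a b') (M b' c) ∧
      ξ (M a b) (J b c) = ξ (M a b') (J b' c)) := by
  obtain ⟨q1, q2, q3, q4⟩ := su_quad_aux N ω J M B hbr ξ hξ a b c hab hbc hcN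
  refine ⟨⟨by linarith, q1, by linarith, q3⟩, ?_⟩
  intro b' hab' hb'c
  obtain ⟨q1', q2', q3', q4'⟩ := su_quad_aux N ω J M B hbr ξ hξ a b' c hab' hb'c hcN
  exact ⟨by linarith, by linarith, by linarith, by linarith⟩
end
end

section
/- Let ξ be any 2-cocycle on su_ω(N+1) and let 0 ≤ a < b < c ≤ N. Then ξ(J_{ab},J_{ac}) = ξ(M_{ab},M_{ac}) = ω_{ab}·ξ(M_{bc},B_b), and ξ(J_{ac},J_{bc}) = ξ(M_{ac},M_{bc}) = ω_{bc}·ξ(M_{ab},B_{b+1}); moreover ξ(J_{ab},M_{ac}) = −ξ(M_{ab},J_{ac}) = −ω_{ab}·ξ(J_{bc},B_b), and ξ(J_{ac},M_{bc}) = −ξ(M_{ac},J_{bc}) = ω_{bc}·ξ(J_{ab},B_{b+1}). -/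
open Finset

noncomputable section

theorem su_cocycle_outer_values {L : Type*} [LieRing L] [LieAlgebra ℝ L]
    (N : ℕ) (hN : 1 ≤ N) (ω : ℕ → ℝ) (J M : ℕ → ℕ → L) (B : ℕ → L)
    (hbr : SUBrackets N ω J M B) (hbasis : SUBasis N J M B)
    (ξ : L →ₗ[ℝ] L →ₗ[ℝ] ℝ) (hξ : IsLieCocycle ξ)
    (a b c : ℕ) (hab : a < b) (hbc : b < c) (hcN : c ≤ N) :
    (ξ (J a b) (J a c) = ξ (M a b) (M a c) ∧
      ξ (J a b) (J a c) = ckW ω a b * ξ (M b c) (B b)) ∧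
    (ξ (J a c) (J b c) = ξ (M a c) (M b c) ∧
      ξ (J a c) (J b c) = ckW ω b c * ξ (M a b) (B (b + 1))) ∧
    (ξ (J a b) (M a c) = -(ξ (M a b) (J a c)) ∧
      ξ (J a b) (M a c) = -(ckW ω a b * ξ (J b c) (B b))) ∧
    (ξ (J a c) (M b c) = -(ξ (M a c) (J b c)) ∧
      ξ (J a c) (M b c) = ckW ω b c * ξ (J a b) (B (b + 1))) := by

  obtain ⟨halt, hcoc⟩ := hξ
  have skew : ∀ x y : L, ξ y x = -ξ x y := by
    intro x y
    have h := halt (x + y)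
    simp only [map_add, LinearMap.add_apply, halt x, halt y] at h
    linarith
  have hac : a < c := hab.trans hbc
  have hb1 : 1 ≤ b := by omega
  have hbN : b ≤ N := by omega
  have hb1' : 1 ≤ b + 1 := by omega
  have hbN' : b + 1 ≤ N := by omega
  -- kappa computations
  have h1 : ckKappa a b b = ckKappa a c b + 1 := by
    unfold ckKappa; split_ifs <;> first | (exfalso; omega) | norm_num
  have h2 : ckKappa a b b + ckKappa a c b ≠ 0 := by
    unfold ckKappa; split_ifs <;> first | (exfalso; omega) | norm_num
  have h3 : ckKappa b c (b + 1) = ckKappa a c (b + 1) + 1 := by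
    unfold ckKappa; split_ifs <;> first | (exfalso; omega) | norm_num
  have h4 : ckKappa b c (b + 1) + ckKappa a c (b + 1) ≠ 0 := by
    unfold ckKappa; split_ifs <;> first | (exfalso; omega) | norm_num
  -- Part 1 : triples (J a b, M a c, B b) and (M a b, J a c, B b)
  have t1 := hcoc (J a b) (M a c) (B b)
  rw [hbr.jm_left a b c hab hbc hcN, hbr.mb a c b hac hcN hb1 hbN,
    ← lie_skew (B b) (J a b), hbr.jb a b b hab hbN hb1 hbN] at t1
  simp only [map_smul, map_neg, LinearMap.smul_apply, LinearMap.neg_apply,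
    smul_eq_mul, neg_neg] at t1
  rw [skew (J a b) (J a c)] at t1
  have t2 := hcoc (M a b) (J a c) (B b)
  rw [hbr.mj_left a b c hab hbc hcN, hbr.jb a c b hac hcN hb1 hbN,
    ← lie_skew (B b) (M a b), hbr.mb a b b hab hbN hb1 hbN] at t2
  simp only [map_smul, map_neg, LinearMap.smul_apply, LinearMap.neg_apply,
    smul_eq_mul, neg_neg] at t2
  rw [skew (M a b) (M a c)] at t2
  have hs1 : (ckKappa a b b + ckKappa a c b) *
      (ξ (J a b) (J a c) - ξ (M a b) (M a c)) = 0 := by linear_combination t1 + t2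
  have g1a : ξ (J a b) (J a c) = ξ (M a b) (M a c) := by
    rcases mul_eq_zero.mp hs1 with h | h
    · exact absurd h h2
    · linarith
  have g1b : ξ (J a b) (J a c) = ckW ω a b * ξ (M b c) (B b) := by
    linear_combination t2 - ckKappa a c b * g1a - ξ (J a b) (J a c) * h1
  -- Part 2 : triples (J a c, M b c, B (b+1)) and (M a c, J b c, B (b+1))
  have t3 := hcoc (J a c) (M b c) (B (b + 1))
  rw [hbr.jm_right a b c hab hbc hcN, hbr.mb b c (b + 1) hbc hcN hb1' hbN',
    ← lie_skew (B (b + 1)) (J a c), hbr.jb a c (b + 1) hac hcN hb1' hbN'] at t3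
  simp only [map_smul, map_neg, LinearMap.smul_apply, LinearMap.neg_apply,
    smul_eq_mul, neg_neg] at t3
  rw [skew (J a c) (J b c)] at t3
  have t4 := hcoc (M a c) (J b c) (B (b + 1))
  rw [hbr.mj_right a b c hab hbc hcN, hbr.jb b c (b + 1) hbc hcN hb1' hbN',
    ← lie_skew (B (b + 1)) (M a c), hbr.mb a c (b + 1) hac hcN hb1' hbN'] at t4
  simp only [map_smul, map_neg, LinearMap.smul_apply, LinearMap.neg_apply,
    smul_eq_mul, neg_neg] at t4
  rw [skew (M a c) (M b c)] at t4
  have hs2 : (ckKappa b c (b + 1) + ckKappa a c (b + 1)) *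
      (ξ (J a c) (J b c) - ξ (M a c) (M b c)) = 0 := by linear_combination t3 + t4
  have g2a : ξ (J a c) (J b c) = ξ (M a c) (M b c) := by
    rcases mul_eq_zero.mp hs2 with h | h
    · exact absurd h h4
    · linarith
  have g2b : ξ (J a c) (J b c) = ckW ω b c * ξ (M a b) (B (b + 1)) := by
    linear_combination -t4 + ckKappa b c (b + 1) * g2a - ξ (J a c) (J b c) * h3
  -- Part 3 : triples (J a b, J a c, B b) and (M a b, M a c, B b)
  have t5 := hcoc (J a b) (J a c) (B b)
  rw [hbr.jj_left a b c hab hbc hcN, hbr.jb a c b hac hcN hb1 hbN,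
    ← lie_skew (B b) (J a b), hbr.jb a b b hab hbN hb1 hbN] at t5
  simp only [map_smul, map_neg, LinearMap.smul_apply, LinearMap.neg_apply,
    smul_eq_mul, neg_neg] at t5
  rw [skew (J a b) (M a c)] at t5
  have t6 := hcoc (M a b) (M a c) (B b)
  rw [hbr.mm_left a b c hab hbc hcN, hbr.mb a c b hac hcN hb1 hbN,
    ← lie_skew (B b) (M a b), hbr.mb a b b hab hbN hb1 hbN] at t6
  simp only [map_smul, map_neg, LinearMap.smul_apply, LinearMap.neg_apply,
    smul_eq_mul, neg_neg] at t6
  rw [skew (M a b) (J a c)] at t6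
  have hs3 : (ckKappa a b b + ckKappa a c b) *
      (ξ (J a b) (M a c) + ξ (M a b) (J a c)) = 0 := by linear_combination t6 - t5
  have g3a : ξ (J a b) (M a c) = -(ξ (M a b) (J a c)) := by
    rcases mul_eq_zero.mp hs3 with h | h
    · exact absurd h h2
    · linarith
  have g3b : ξ (J a b) (M a c) = -(ckW ω a b * ξ (J b c) (B b)) := by
    linear_combination t6 - ckKappa a c b * g3a - ξ (J a b) (M a c) * h1
  -- Part 4 : triples (J a c, J b c, B (b+1)) and (M a c, M b c, B (b+1))
  have t7 := hcoc (J a c) (J b c) (B (b + 1))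
  rw [hbr.jj_right a b c hab hbc hcN, hbr.jb b c (b + 1) hbc hcN hb1' hbN',
    ← lie_skew (B (b + 1)) (J a c), hbr.jb a c (b + 1) hac hcN hb1' hbN'] at t7
  simp only [map_smul, map_neg, LinearMap.smul_apply, LinearMap.neg_apply,
    smul_eq_mul, neg_neg] at t7
  rw [skew (J a c) (M b c)] at t7
  have t8 := hcoc (M a c) (M b c) (B (b + 1))
  rw [hbr.mm_right a b c hab hbc hcN, hbr.mb b c (b + 1) hbc hcN hb1' hbN',
    ← lie_skew (B (b + 1)) (M a c), hbr.mb a c (b + 1) hac hcN hb1' hbN'] at t8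
  simp only [map_smul, map_neg, LinearMap.smul_apply, LinearMap.neg_apply,
    smul_eq_mul, neg_neg] at t8
  rw [skew (M a c) (J b c)] at t8
  have hs4 : (ckKappa b c (b + 1) + ckKappa a c (b + 1)) *
      (ξ (J a c) (M b c) + ξ (M a c) (J b c)) = 0 := by linear_combination t8 - t7
  have g4a : ξ (J a c) (M b c) = -(ξ (M a c) (J b c)) := by
    rcases mul_eq_zero.mp hs4 with h | h
    · exact absurd h h4
    · linarith
  have g4b : ξ (J a c) (M b c) = ckW ω b c * ξ (J a b) (B (b + 1)) := by
    linear_combination -t8 + ckKappa b c (b + 1) * g4a - ξ (J a c) (M b c) * h3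
  exact ⟨⟨g1a, g1b⟩, ⟨g2a, g2b⟩, ⟨g3a, g3b⟩, ⟨g4a, g4b⟩⟩
end
end

section
/- Let ξ be any 2-cocycle on su_ω(N+1) and let 0 ≤ a < b < c ≤ N. Then ξ(J_{ac},M_{ac}) = ω_{bc}·ξ(J_{ab},M_{ab}) + ω_{ab}·ξ(J_{bc},M_{bc}). Consequently, setting α_k := ξ(J_{k−1,k},M_{k−1,k}) for 1 ≤ k ≤ N, one has ξ(J_{ab},M_{ab}) = Σ_{s=a+1}^{b} ω_{a,s−1}ω_{s,b}·α_s for all 0 ≤ a < b ≤ N. -/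
open Finset

noncomputable section

lemma myCkW_succ (ω : ℕ → ℝ) (a b : ℕ) (h : a ≤ b) :
    ckW ω a (b + 1) = ckW ω a b * ω (b + 1) := by
  unfold ckW
  rw [Finset.prod_Icc_succ_top (by omega)]

lemma myCkW_self (ω : ℕ → ℝ) (a : ℕ) : ckW ω a a = 1 := by
  unfold ckW; simp

lemma myCkW_one (ω : ℕ → ℝ) (b : ℕ) : ckW ω b (b + 1) = ω (b + 1) := by
  unfold ckW; simp

theorem su_cocycle_JM_recursion {L : Type*} [LieRing L] [LieAlgebra ℝ L]
    (N : ℕ) (hN : 1 ≤ N) (ω : ℕ → ℝ) (J M : ℕ → ℕ → L) (B : ℕ → L)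
    (hbr : SUBrackets N ω J M B) (hbasis : SUBasis N J M B)
    (ξ : L →ₗ[ℝ] L →ₗ[ℝ] ℝ) (hξ : IsLieCocycle ξ) :
    (∀ a b c, a < b → b < c → c ≤ N →
      ξ (J a c) (M a c) =
        ckW ω b c * ξ (J a b) (M a b) + ckW ω a b * ξ (J b c) (M b c)) ∧
    (∀ a b, a < b → b ≤ N →
      ξ (J a b) (M a b) =
        ∑ s ∈ Finset.Icc (a + 1) b,
          ckW ω a (s - 1) * ckW ω s b * ξ (J (s - 1) s) (M (s - 1) s)) := by
  obtain ⟨halt, hcoc⟩ := hξ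
  have hanti : ∀ x y : L, ξ y x = - ξ x y := by
    intro x y
    have h := halt (x + y)
    have hx := halt x
    have hy := halt y
    simp only [map_add, LinearMap.add_apply] at h
    linarith
  have part1 : ∀ a b c, a < b → b < c → c ≤ N →
      ξ (J a c) (M a c) =
        ckW ω b c * ξ (J a b) (M a b) + ckW ω a b * ξ (J b c) (M b c) := by
    intro a b c hab hbc hcN
    have h := hcoc (J a b) (J b c) (M a c)
    have h1 : ⁅J a b, J b c⁆ = -(J a c) := hbr.jj_mid a b c hab hbc hcN
    have h2 : ⁅J b c, M a c⁆ = -(ckW ω b c • M a b) := by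
      rw [← lie_skew, hbr.mj_right a b c hab hbc hcN]
    have h3 : ⁅M a c, J a b⁆ = -(ckW ω a b • M b c) := by
      rw [← lie_skew, hbr.jm_left a b c hab hbc hcN]
    rw [h1, h2, h3] at h
    simp only [map_neg, map_smul, LinearMap.neg_apply, LinearMap.smul_apply,
      smul_eq_mul] at h
    rw [hanti (J a b) (M a b), hanti (J b c) (M b c)] at h
    linear_combination -h
  have part2 : ∀ b a, a < b → b ≤ N →
      ξ (J a b) (M a b) = ∑ s ∈ Finset.Icc (a + 1) b,
        ckW ω a (s - 1) * ckW ω s b * ξ (J (s - 1) s) (M (s - 1) s) := by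
    intro b
    induction b with
    | zero => intro a hab _; omega
    | succ b ih =>
      intro a hab hbN
      rcases eq_or_lt_of_le (Nat.lt_succ_iff.mp hab) with h | h
      · subst h
        rw [Finset.Icc_self, Finset.sum_singleton]
        simp [myCkW_self]
      · have hbN' : b ≤ N := Nat.le_of_succ_le hbN
        rw [part1 a b (b + 1) h (Nat.lt_succ_self b) hbN, ih a h hbN']
        rw [Finset.sum_Icc_succ_top (by omega : a + 1 ≤ b + 1)]
        have hterm : ckW ω a (b + 1 - 1) * ckW ω (b + 1) (b + 1) *
            ξ (J (b + 1 - 1) (b + 1)) (M (b + 1 - 1) (b + 1)) =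
            ckW ω a b * ξ (J b (b + 1)) (M b (b + 1)) := by
          simp [myCkW_self]
        rw [hterm, Finset.mul_sum]
        congr 1
        apply Finset.sum_congr rfl
        intro s hs
        have hsb : s ≤ b := (Finset.mem_Icc.mp hs).2
        rw [myCkW_succ ω s b hsb, myCkW_one]
        ring
  exact ⟨part1, fun a b hab hbN => part2 b a hab hbN⟩
end
end

section
/- Let ω = (ω_1,…,ω_N) and let ω' = (ω_N, ω_{N−1},…,ω_1) be the reversed parameter sequence. Then the linear map from su_ω(N+1) to su_{ω'}(N+1) defined on basis elements by J_{ab} ↦ −J'_{N−b,N−a}, M_{ab} ↦ −M'_{N−b,N−a} (for 0 ≤ a < b ≤ N) and B_l ↦ B'_{N+1−l} (for 1 ≤ l ≤ N), where J', M', B' denote the corresponding basis elements of su_{ω'}(N+1), is an isomorphism of real Lie algebras; in particular su_{ω_1,ω_2,…,ω_{N−1},ω_N}(N+1) ≅ su_{ω_N,ω_{N−1},…,ω_2,ω_1}(N+1). -/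
open Finset

noncomputable section

/-! ### Auxiliary lemmas for `su_reverse_iso` -/

lemma ckW_rev (N : ℕ) (ω ω' : ℕ → ℝ)
    (hrev : ∀ k, 1 ≤ k → k ≤ N → ω' k = ω (N + 1 - k))
    (a b : ℕ) (hab : a ≤ b) (hbN : b ≤ N) :
    ckW ω' (N - b) (N - a) = ckW ω a b := by
  unfold ckW
  rw [Finset.prod_congr rfl (fun s hs => by
    simp only [Finset.mem_Icc] at hs; exact hrev s (by omega) (by omega))]
  exact Finset.prod_nbij' (fun s => N + 1 - s) (fun t => N + 1 - t)
    (fun s hs => by simp only [Finset.mem_Icc] at *; omega)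
    (fun t ht => by simp only [Finset.mem_Icc] at *; omega)
    (fun s hs => by simp only [Finset.mem_Icc] at *; omega)
    (fun t ht => by simp only [Finset.mem_Icc] at *; omega)
    (fun s hs => rfl)

lemma ckKappa_rev (N a b l : ℕ) (ha : a ≤ N) (hb : b ≤ N) (hl1 : 1 ≤ l) (hlN : l ≤ N) :
    ckKappa (N - b) (N - a) (N + 1 - l) = ckKappa a b l := by
  unfold ckKappa
  have e1 : (if N - b = N + 1 - l - 1 then (1:ℝ) else 0) = (if b = l then (1:ℝ) else 0) := by
    by_cases h : b = l
    · rw [if_pos (by omega), if_pos h]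
    · rw [if_neg (by omega), if_neg h]
  have e2 : (if N - a = N + 1 - l - 1 then (1:ℝ) else 0) = (if a = l then (1:ℝ) else 0) := by
    by_cases h : a = l
    · rw [if_pos (by omega), if_pos h]
    · rw [if_neg (by omega), if_neg h]
  have e3 : (if N - a = N + 1 - l then (1:ℝ) else 0) = (if a = l - 1 then (1:ℝ) else 0) := by
    by_cases h : a = l - 1
    · rw [if_pos (by omega), if_pos h]
    · rw [if_neg (by omega), if_neg h]
  have e4 : (if N - b = N + 1 - l then (1:ℝ) else 0) = (if b = l - 1 then (1:ℝ) else 0) := by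
    by_cases h : b = l - 1
    · rw [if_pos (by omega), if_pos h]
    · rw [if_neg (by omega), if_neg h]
  rw [e1, e2, e3, e4]; ring

lemma sum_rev_aux {V : Type*} [AddCommMonoid V] (N a b : ℕ) (hbN : b ≤ N) (B' : ℕ → V) :
    ∑ s ∈ Finset.Icc (a + 1) b, B' (N + 1 - s) = ∑ s ∈ Finset.Icc (N - b + 1) (N - a), B' s :=
  Finset.sum_nbij' (fun s => N + 1 - s) (fun t => N + 1 - t)
    (fun s hs => by simp only [Finset.mem_Icc] at *; omega)
    (fun t ht => by simp only [Finset.mem_Icc] at *; omega)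
    (fun s hs => by simp only [Finset.mem_Icc] at *; omega)
    (fun t ht => by simp only [Finset.mem_Icc] at *; omega)
    (fun s hs => rfl)

/-- The reversed target family used to define the isomorphism. -/
def revT {V : Type*} [Neg V] (N : ℕ) (J' M' : ℕ → ℕ → V) (B' : ℕ → V) : SUIdx N → V :=
  fun x =>
    match x.1 with
    | Sum.inl (a, b) => -(J' (N - b) (N - a))
    | Sum.inr (Sum.inl (a, b)) => -(M' (N - b) (N - a))
    | Sum.inr (Sum.inr l) => B' (N + 1 - l)

theorem su_reverse_iso {L L' : Type*} [LieRing L] [LieAlgebra ℝ L]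
    [LieRing L'] [LieAlgebra ℝ L']
    (N : ℕ) (hN : 1 ≤ N) (ω ω' : ℕ → ℝ)
    (hrev : ∀ k, 1 ≤ k → k ≤ N → ω' k = ω (N + 1 - k))
    (J M : ℕ → ℕ → L) (B : ℕ → L)
    (hbr : SUBrackets N ω J M B) (hbasis : SUBasis N J M B)
    (J' M' : ℕ → ℕ → L') (B' : ℕ → L')
    (hbr' : SUBrackets N ω' J' M' B') (hbasis' : SUBasis N J' M' B') :
    ∃ e : L ≃ₗ⁅ℝ⁆ L',
      (∀ a b, a < b → b ≤ N →
        e (J a b) = -(J' (N - b) (N - a)) ∧ e (M a b) = -(M' (N - b) (N - a))) ∧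
      (∀ l, 1 ≤ l → l ≤ N → e (B l) = B' (N + 1 - l)) := by
  obtain ⟨hli, hspan⟩ := hbasis
  obtain ⟨hli', hspan'⟩ := hbasis'
  let bL : Module.Basis (SUIdx N) ℝ L := Module.Basis.mk hli hspan
  let bL' : Module.Basis (SUIdx N) ℝ L' := Module.Basis.mk hli' hspan'
  let fL : L →ₗ[ℝ] L' := bL.constr ℝ (revT N J' M' B')
  let gL : L' →ₗ[ℝ] L := bL'.constr ℝ (revT N J M B)
  have fJ : ∀ a b, a < b → b ≤ N → fL (J a b) = -(J' (N - b) (N - a)) := by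
    intro a b h1 h2
    have hb : bL ⟨Sum.inl (a, b), ⟨h1, h2⟩⟩ = J a b := Module.Basis.mk_apply hli hspan _
    have h := bL.constr_basis ℝ (revT N J' M' B') ⟨Sum.inl (a, b), ⟨h1, h2⟩⟩
    rw [hb] at h
    exact h
  have fM : ∀ a b, a < b → b ≤ N → fL (M a b) = -(M' (N - b) (N - a)) := by
    intro a b h1 h2
    have hb : bL ⟨Sum.inr (Sum.inl (a, b)), ⟨h1, h2⟩⟩ = M a b := Module.Basis.mk_apply hli hspan _
    have h := bL.constr_basis ℝ (revT N J' M' B') ⟨Sum.inr (Sum.inl (a, b)), ⟨h1, h2⟩⟩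
    rw [hb] at h
    exact h
  have fB : ∀ l, 1 ≤ l → l ≤ N → fL (B l) = B' (N + 1 - l) := by
    intro l h1 h2
    have hb : bL ⟨Sum.inr (Sum.inr l), ⟨h1, h2⟩⟩ = B l := Module.Basis.mk_apply hli hspan _
    have h := bL.constr_basis ℝ (revT N J' M' B') ⟨Sum.inr (Sum.inr l), ⟨h1, h2⟩⟩
    rw [hb] at h
    exact h
  have gJ : ∀ a b, a < b → b ≤ N → gL (J' a b) = -(J (N - b) (N - a)) := by
    intro a b h1 h2
    have hb : bL' ⟨Sum.inl (a, b), ⟨h1, h2⟩⟩ = J' a b := Module.Basis.mk_apply hli' hspan' _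
    have h := bL'.constr_basis ℝ (revT N J M B) ⟨Sum.inl (a, b), ⟨h1, h2⟩⟩
    rw [hb] at h
    exact h
  have gM : ∀ a b, a < b → b ≤ N → gL (M' a b) = -(M (N - b) (N - a)) := by
    intro a b h1 h2
    have hb : bL' ⟨Sum.inr (Sum.inl (a, b)), ⟨h1, h2⟩⟩ = M' a b := Module.Basis.mk_apply hli' hspan' _
    have h := bL'.constr_basis ℝ (revT N J M B) ⟨Sum.inr (Sum.inl (a, b)), ⟨h1, h2⟩⟩
    rw [hb] at h
    exact h
  have gB : ∀ l, 1 ≤ l → l ≤ N → gL (B' l) = B (N + 1 - l) := by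
    intro l h1 h2
    have hb : bL' ⟨Sum.inr (Sum.inr l), ⟨h1, h2⟩⟩ = B' l := Module.Basis.mk_apply hli' hspan' _
    have h := bL'.constr_basis ℝ (revT N J M B) ⟨Sum.inr (Sum.inr l), ⟨h1, h2⟩⟩
    rw [hb] at h
    exact h
  have hck : ∀ a b, a ≤ b → b ≤ N → ckW ω' (N - b) (N - a) = ckW ω a b :=
    fun a b h1 h2 => ckW_rev N ω ω' hrev a b h1 h2
  have psym : ∀ x y : L, fL ⁅x, y⁆ = ⁅fL x, fL y⁆ → fL ⁅y, x⁆ = ⁅fL y, fL x⁆ := by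
    intro x y h
    rw [← lie_skew y x, map_neg, h]
    exact lie_skew (fL y) (fL x)
  have pJJ2 : ∀ a b c, a < b → b < c → c ≤ N →
      fL ⁅J a b, J a c⁆ = ⁅fL (J a b), fL (J a c)⁆ := by
    intro a b c h1 h2 h3
    rw [hbr.jj_left a b c h1 h2 h3, map_smul, fJ b c h2 h3, fJ a b h1 (by omega),
      fJ a c (by omega) h3, neg_lie, lie_neg, neg_neg, ← lie_skew,
      hbr'.jj_right (N - c) (N - b) (N - a) (by omega) (by omega) (by omega),
      hck a b h1.le (by omega), smul_neg]
  have pJJ4 : ∀ a b c, a < b → b < c → c ≤ N →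
      fL ⁅J a c, J b c⁆ = ⁅fL (J a c), fL (J b c)⁆ := by
    intro a b c h1 h2 h3
    rw [hbr.jj_right a b c h1 h2 h3, map_smul, fJ a b h1 (by omega),
      fJ a c (by omega) h3, fJ b c h2 h3, neg_lie, lie_neg, neg_neg, ← lie_skew,
      hbr'.jj_left (N - c) (N - b) (N - a) (by omega) (by omega) (by omega),
      hck b c h2.le h3, smul_neg]
  have pJJ6 : ∀ a b c, a < b → b < c → c ≤ N →
      fL ⁅J a b, J b c⁆ = ⁅fL (J a b), fL (J b c)⁆ := by
    intro a b c h1 h2 h3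
    rw [hbr.jj_mid a b c h1 h2 h3, map_neg, fJ a c (by omega) h3, fJ a b h1 (by omega),
      fJ b c h2 h3, neg_lie, lie_neg, neg_neg, ← lie_skew,
      hbr'.jj_mid (N - c) (N - b) (N - a) (by omega) (by omega) (by omega), neg_neg, neg_neg]
  have pMM2 : ∀ a b c, a < b → b < c → c ≤ N →
      fL ⁅M a b, M a c⁆ = ⁅fL (M a b), fL (M a c)⁆ := by
    intro a b c h1 h2 h3
    rw [hbr.mm_left a b c h1 h2 h3, map_smul, fJ b c h2 h3, fM a b h1 (by omega),
      fM a c (by omega) h3, neg_lie, lie_neg, neg_neg, ← lie_skew,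
      hbr'.mm_right (N - c) (N - b) (N - a) (by omega) (by omega) (by omega),
      hck a b h1.le (by omega), smul_neg]
  have pMM4 : ∀ a b c, a < b → b < c → c ≤ N →
      fL ⁅M a c, M b c⁆ = ⁅fL (M a c), fL (M b c)⁆ := by
    intro a b c h1 h2 h3
    rw [hbr.mm_right a b c h1 h2 h3, map_smul, fJ a b h1 (by omega),
      fM a c (by omega) h3, fM b c h2 h3, neg_lie, lie_neg, neg_neg, ← lie_skew,
      hbr'.mm_left (N - c) (N - b) (N - a) (by omega) (by omega) (by omega),
      hck b c h2.le h3, smul_neg]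
  have pMM6 : ∀ a b c, a < b → b < c → c ≤ N →
      fL ⁅M a b, M b c⁆ = ⁅fL (M a b), fL (M b c)⁆ := by
    intro a b c h1 h2 h3
    rw [hbr.mm_mid a b c h1 h2 h3, fJ a c (by omega) h3, fM a b h1 (by omega),
      fM b c h2 h3, neg_lie, lie_neg, neg_neg, ← lie_skew,
      hbr'.mm_mid (N - c) (N - b) (N - a) (by omega) (by omega) (by omega)]
  have pJM1 : ∀ a b, a < b → b ≤ N →
      fL ⁅J a b, M a b⁆ = ⁅fL (J a b), fL (M a b)⁆ := by
    intro a b h1 h2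
    rw [hbr.jm_same a b h1 h2, map_smul, map_sum,
      Finset.sum_congr rfl (fun s hs => by
        simp only [Finset.mem_Icc] at hs; exact fB s (by omega) (by omega)),
      sum_rev_aux N a b h2 B', fJ a b h1 h2, fM a b h1 h2, neg_lie, lie_neg, neg_neg,
      hbr'.jm_same (N - b) (N - a) (by omega) (by omega), hck a b h1.le h2]
  have pJM2 : ∀ a b c, a < b → b < c → c ≤ N →
      fL ⁅J a b, M a c⁆ = ⁅fL (J a b), fL (M a c)⁆ := by
    intro a b c h1 h2 h3
    rw [hbr.jm_left a b c h1 h2 h3, map_smul, fM b c h2 h3, fJ a b h1 (by omega),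
      fM a c (by omega) h3, neg_lie, lie_neg, neg_neg, ← lie_skew,
      hbr'.mj_right (N - c) (N - b) (N - a) (by omega) (by omega) (by omega),
      hck a b h1.le (by omega), smul_neg]
  have pJM3 : ∀ a b c, a < b → b < c → c ≤ N →
      fL ⁅J a c, M a b⁆ = ⁅fL (J a c), fL (M a b)⁆ := by
    intro a b c h1 h2 h3
    have hL : ⁅J a c, M a b⁆ = ckW ω a b • M b c := by
      rw [← lie_skew, hbr.mj_left a b c h1 h2 h3, neg_neg]
    rw [hL, map_smul, fM b c h2 h3, fJ a c (by omega) h3, fM a b h1 (by omega),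
      neg_lie, lie_neg, neg_neg,
      hbr'.jm_right (N - c) (N - b) (N - a) (by omega) (by omega) (by omega),
      hck a b h1.le (by omega), smul_neg]
  have pJM4 : ∀ a b c, a < b → b < c → c ≤ N →
      fL ⁅J a c, M b c⁆ = ⁅fL (J a c), fL (M b c)⁆ := by
    intro a b c h1 h2 h3
    rw [hbr.jm_right a b c h1 h2 h3, map_neg, map_smul, fM a b h1 (by omega),
      fJ a c (by omega) h3, fM b c h2 h3, neg_lie, lie_neg, neg_neg]
    have hR : ⁅J' (N - c) (N - a), M' (N - c) (N - b)⁆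
        = ckW ω' (N - c) (N - b) • M' (N - b) (N - a) := by
      rw [← lie_skew, hbr'.mj_left (N - c) (N - b) (N - a) (by omega) (by omega) (by omega),
        neg_neg]
    rw [hR, hck b c h2.le h3, smul_neg, neg_neg]
  have pJM5 : ∀ a b c, a < b → b < c → c ≤ N →
      fL ⁅J b c, M a c⁆ = ⁅fL (J b c), fL (M a c)⁆ := by
    intro a b c h1 h2 h3
    have hL : ⁅J b c, M a c⁆ = -(ckW ω b c • M a b) := by
      rw [← lie_skew, hbr.mj_right a b c h1 h2 h3]
    rw [hL, map_neg, map_smul, fM a b h1 (by omega), fJ b c h2 h3, fM a c (by omega) h3,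
      neg_lie, lie_neg, neg_neg,
      hbr'.jm_left (N - c) (N - b) (N - a) (by omega) (by omega) (by omega),
      hck b c h2.le h3, smul_neg, neg_neg]
  have pJM6 : ∀ a b c, a < b → b < c → c ≤ N →
      fL ⁅J a b, M b c⁆ = ⁅fL (J a b), fL (M b c)⁆ := by
    intro a b c h1 h2 h3
    rw [hbr.jm_mid a b c h1 h2 h3, map_neg, fM a c (by omega) h3, fJ a b h1 (by omega),
      fM b c h2 h3, neg_lie, lie_neg, neg_neg]
    have hR : ⁅J' (N - b) (N - a), M' (N - c) (N - b)⁆ = M' (N - c) (N - a) := by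
      rw [← lie_skew, hbr'.mj_mid (N - c) (N - b) (N - a) (by omega) (by omega) (by omega),
        neg_neg]
    rw [hR, neg_neg]
  have pJM7 : ∀ a b c, a < b → b < c → c ≤ N →
      fL ⁅J b c, M a b⁆ = ⁅fL (J b c), fL (M a b)⁆ := by
    intro a b c h1 h2 h3
    have hL : ⁅J b c, M a b⁆ = M a c := by
      rw [← lie_skew, hbr.mj_mid a b c h1 h2 h3, neg_neg]
    rw [hL, fM a c (by omega) h3, fJ b c h2 h3, fM a b h1 (by omega),
      neg_lie, lie_neg, neg_neg,
      hbr'.jm_mid (N - c) (N - b) (N - a) (by omega) (by omega) (by omega)]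
  have hJB : ∀ a b l, a < b → b ≤ N → 1 ≤ l → l ≤ N →
      fL ⁅J a b, B l⁆ = ⁅fL (J a b), fL (B l)⁆ := by
    intro a b l h1 h2 hl1 hl2
    rw [hbr.jb a b l h1 h2 hl1 hl2, map_smul, fM a b h1 h2, fJ a b h1 h2, fB l hl1 hl2,
      neg_lie, hbr'.jb (N - b) (N - a) (N + 1 - l) (by omega) (by omega) (by omega) (by omega),
      ckKappa_rev N a b l (by omega) h2 hl1 hl2, smul_neg]
  have hMB : ∀ a b l, a < b → b ≤ N → 1 ≤ l → l ≤ N →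
      fL ⁅M a b, B l⁆ = ⁅fL (M a b), fL (B l)⁆ := by
    intro a b l h1 h2 hl1 hl2
    rw [hbr.mb a b l h1 h2 hl1 hl2, map_neg, map_smul, fJ a b h1 h2, fM a b h1 h2,
      fB l hl1 hl2, neg_lie,
      hbr'.mb (N - b) (N - a) (N + 1 - l) (by omega) (by omega) (by omega) (by omega),
      ckKappa_rev N a b l (by omega) h2 hl1 hl2, smul_neg]
  have hBBlt : ∀ k l, 1 ≤ k → k < l → l ≤ N →
      fL ⁅B k, B l⁆ = ⁅fL (B k), fL (B l)⁆ := by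
    intro k l h1 h2 h3
    rw [hbr.bb k l h1 h2 h3, map_zero, fB k h1 (by omega), fB l (by omega) h3, ← lie_skew,
      hbr'.bb (N + 1 - l) (N + 1 - k) (by omega) (by omega) (by omega), neg_zero]
  have hJJ : ∀ a b d e, a < b → b ≤ N → d < e → e ≤ N →
      fL ⁅J a b, J d e⁆ = ⁅fL (J a b), fL (J d e)⁆ := by
    intro a b d e h1 h2 h3 h4
    rcases eq_or_ne a d with rfl | had
    · rcases lt_trichotomy b e with h | rfl | h
      · exact pJJ2 a b e h1 h h4
      · rw [lie_self, map_zero, lie_self]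
      · exact psym _ _ (pJJ2 a e b h3 h h2)
    · rcases eq_or_ne b e with rfl | hbe
      · rcases lt_or_gt_of_ne had with h | h
        · exact pJJ4 a d b h h3 h2
        · exact psym _ _ (pJJ4 d a b h h1 h2)
      · rcases eq_or_ne b d with rfl | hbd
        · exact pJJ6 a b e h1 h3 h4
        · rcases eq_or_ne a e with rfl | hae
          · exact psym _ _ (pJJ6 d a b h3 h1 h2)
          · rw [hbr.jj_disj a b d e h1 h2 h3 h4 had hae hbd hbe, map_zero,
              fJ a b h1 h2, fJ d e h3 h4, neg_lie, lie_neg, neg_neg,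
              hbr'.jj_disj (N - b) (N - a) (N - e) (N - d) (by omega) (by omega) (by omega)
                (by omega) (by omega) (by omega) (by omega) (by omega)]
  have hMM : ∀ a b d e, a < b → b ≤ N → d < e → e ≤ N →
      fL ⁅M a b, M d e⁆ = ⁅fL (M a b), fL (M d e)⁆ := by
    intro a b d e h1 h2 h3 h4
    rcases eq_or_ne a d with rfl | had
    · rcases lt_trichotomy b e with h | rfl | h
      · exact pMM2 a b e h1 h h4
      · rw [lie_self, map_zero, lie_self]
      · exact psym _ _ (pMM2 a e b h3 h h2)
    · rcases eq_or_ne b e with rfl | hbe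
      · rcases lt_or_gt_of_ne had with h | h
        · exact pMM4 a d b h h3 h2
        · exact psym _ _ (pMM4 d a b h h1 h2)
      · rcases eq_or_ne b d with rfl | hbd
        · exact pMM6 a b e h1 h3 h4
        · rcases eq_or_ne a e with rfl | hae
          · exact psym _ _ (pMM6 d a b h3 h1 h2)
          · rw [hbr.mm_disj a b d e h1 h2 h3 h4 had hae hbd hbe, map_zero,
              fM a b h1 h2, fM d e h3 h4, neg_lie, lie_neg, neg_neg,
              hbr'.mm_disj (N - b) (N - a) (N - e) (N - d) (by omega) (by omega) (by omega)
                (by omega) (by omega) (by omega) (by omega) (by omega)]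
  have hJM : ∀ a b d e, a < b → b ≤ N → d < e → e ≤ N →
      fL ⁅J a b, M d e⁆ = ⁅fL (J a b), fL (M d e)⁆ := by
    intro a b d e h1 h2 h3 h4
    rcases eq_or_ne a d with rfl | had
    · rcases lt_trichotomy b e with h | rfl | h
      · exact pJM2 a b e h1 h h4
      · exact pJM1 a b h1 h2
      · exact pJM3 a e b h3 h h2
    · rcases eq_or_ne b e with rfl | hbe
      · rcases lt_or_gt_of_ne had with h | h
        · exact pJM4 a d b h h3 h2
        · exact pJM5 d a b h h1 h2
      · rcases eq_or_ne b d with rfl | hbd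
        · exact pJM6 a b e h1 h3 h4
        · rcases eq_or_ne a e with rfl | hae
          · exact pJM7 d a b h3 h1 h2
          · rw [hbr.jm_disj a b d e h1 h2 h3 h4 had hae hbd hbe, map_zero,
              fJ a b h1 h2, fM d e h3 h4, neg_lie, lie_neg, neg_neg,
              hbr'.jm_disj (N - b) (N - a) (N - e) (N - d) (by omega) (by omega) (by omega)
                (by omega) (by omega) (by omega) (by omega) (by omega)]
  have hBB : ∀ k l, 1 ≤ k → k ≤ N → 1 ≤ l → l ≤ N →
      fL ⁅B k, B l⁆ = ⁅fL (B k), fL (B l)⁆ := by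
    intro k l hk1 hk2 hl1 hl2
    rcases lt_trichotomy k l with h | rfl | h
    · exact hBBlt k l hk1 h hl2
    · rw [lie_self, map_zero, lie_self]
    · exact psym _ _ (hBBlt l k hl1 h hk2)
  have main : ∀ x ∈ Set.range (suFam N J M B), ∀ y ∈ Set.range (suFam N J M B),
      fL ⁅x, y⁆ = ⁅fL x, fL y⁆ := by
    rintro x ⟨⟨ix, hix⟩, rfl⟩ y ⟨⟨jx, hjx⟩, rfl⟩
    rcases ix with ⟨a, b⟩ | ⟨a, b⟩ | l <;> rcases jx with ⟨d, e⟩ | ⟨d, e⟩ | k <;>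
      [ (obtain ⟨h1, h2⟩ : a < b ∧ b ≤ N := hix; obtain ⟨h3, h4⟩ : d < e ∧ e ≤ N := hjx;
          exact hJJ a b d e h1 h2 h3 h4);
        (obtain ⟨h1, h2⟩ : a < b ∧ b ≤ N := hix; obtain ⟨h3, h4⟩ : d < e ∧ e ≤ N := hjx;
          exact hJM a b d e h1 h2 h3 h4);
        (obtain ⟨h1, h2⟩ : a < b ∧ b ≤ N := hix; obtain ⟨h3, h4⟩ : 1 ≤ k ∧ k ≤ N := hjx;
          exact hJB a b k h1 h2 h3 h4);
        (obtain ⟨h1, h2⟩ : a < b ∧ b ≤ N := hix; obtain ⟨h3, h4⟩ : d < e ∧ e ≤ N := hjx;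
          exact psym _ _ (hJM d e a b h3 h4 h1 h2));
        (obtain ⟨h1, h2⟩ : a < b ∧ b ≤ N := hix; obtain ⟨h3, h4⟩ : d < e ∧ e ≤ N := hjx;
          exact hMM a b d e h1 h2 h3 h4);
        (obtain ⟨h1, h2⟩ : a < b ∧ b ≤ N := hix; obtain ⟨h3, h4⟩ : 1 ≤ k ∧ k ≤ N := hjx;
          exact hMB a b k h1 h2 h3 h4);
        (obtain ⟨h1, h2⟩ : 1 ≤ l ∧ l ≤ N := hix; obtain ⟨h3, h4⟩ : d < e ∧ e ≤ N := hjx;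
          exact psym _ _ (hJB d e l h3 h4 h1 h2));
        (obtain ⟨h1, h2⟩ : 1 ≤ l ∧ l ≤ N := hix; obtain ⟨h3, h4⟩ : d < e ∧ e ≤ N := hjx;
          exact psym _ _ (hMB d e l h3 h4 h1 h2));
        (obtain ⟨h1, h2⟩ : 1 ≤ l ∧ l ≤ N := hix; obtain ⟨h3, h4⟩ : 1 ≤ k ∧ k ≤ N := hjx;
          exact hBB l k h1 h2 h3 h4) ]
  have key : ∀ x y : L, fL ⁅x, y⁆ = ⁅fL x, fL y⁆ := by
    intro x y
    have hx : x ∈ Submodule.span ℝ (Set.range (suFam N J M B)) := hspan Submodule.mem_top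
    have hy : y ∈ Submodule.span ℝ (Set.range (suFam N J M B)) := hspan Submodule.mem_top
    induction hx using Submodule.span_induction with
    | mem u hu =>
      induction hy using Submodule.span_induction with
      | mem v hv => exact main u hu v hv
      | zero => simp
      | add v w hv hw ihv ihw => rw [lie_add, map_add, ihv, ihw, map_add, lie_add]
      | smul c v hv ihv => rw [lie_smul, map_smul, ihv, map_smul, lie_smul]
    | zero => simp
    | add u v hu hv ihu ihv => rw [add_lie, map_add, ihu, ihv, map_add, add_lie]
    | smul c u hu ihu => rw [smul_lie, map_smul, ihu, map_smul, smul_lie]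
  have hgfc : gL.comp fL = LinearMap.id := by
    apply bL.ext
    rintro ⟨⟨a, b⟩ | ⟨a, b⟩ | l, hix⟩
    ·
      obtain ⟨h1, h2⟩ := show a < b ∧ b ≤ N from hix
      have hb : bL ⟨Sum.inl (a, b), hix⟩ = J a b := Module.Basis.mk_apply hli hspan _
      rw [LinearMap.comp_apply, LinearMap.id_apply, hb, fJ a b h1 h2, map_neg,
        gJ (N - b) (N - a) (by omega) (by omega), neg_neg,
        show N - (N - a) = a by omega, show N - (N - b) = b by omega]
    ·
      obtain ⟨h1, h2⟩ := show a < b ∧ b ≤ N from hix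
      have hb : bL ⟨Sum.inr (Sum.inl (a, b)), hix⟩ = M a b := Module.Basis.mk_apply hli hspan _
      rw [LinearMap.comp_apply, LinearMap.id_apply, hb, fM a b h1 h2, map_neg,
        gM (N - b) (N - a) (by omega) (by omega), neg_neg,
        show N - (N - a) = a by omega, show N - (N - b) = b by omega]
    ·
      obtain ⟨h1, h2⟩ := show 1 ≤ l ∧ l ≤ N from hix
      have hb : bL ⟨Sum.inr (Sum.inr l), hix⟩ = B l := Module.Basis.mk_apply hli hspan _
      rw [LinearMap.comp_apply, LinearMap.id_apply, hb, fB l h1 h2,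
        gB (N + 1 - l) (by omega) (by omega), show N + 1 - (N + 1 - l) = l by omega]
  have hfgc : fL.comp gL = LinearMap.id := by
    apply bL'.ext
    rintro ⟨⟨a, b⟩ | ⟨a, b⟩ | l, hix⟩
    ·
      obtain ⟨h1, h2⟩ := show a < b ∧ b ≤ N from hix
      have hb : bL' ⟨Sum.inl (a, b), hix⟩ = J' a b := Module.Basis.mk_apply hli' hspan' _
      rw [LinearMap.comp_apply, LinearMap.id_apply, hb, gJ a b h1 h2, map_neg,
        fJ (N - b) (N - a) (by omega) (by omega), neg_neg,
        show N - (N - a) = a by omega, show N - (N - b) = b by omega]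
    ·
      obtain ⟨h1, h2⟩ := show a < b ∧ b ≤ N from hix
      have hb : bL' ⟨Sum.inr (Sum.inl (a, b)), hix⟩ = M' a b := Module.Basis.mk_apply hli' hspan' _
      rw [LinearMap.comp_apply, LinearMap.id_apply, hb, gM a b h1 h2, map_neg,
        fM (N - b) (N - a) (by omega) (by omega), neg_neg,
        show N - (N - a) = a by omega, show N - (N - b) = b by omega]
    ·
      obtain ⟨h1, h2⟩ := show 1 ≤ l ∧ l ≤ N from hix
      have hb : bL' ⟨Sum.inr (Sum.inr l), hix⟩ = B' l := Module.Basis.mk_apply hli' hspan' _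
      rw [LinearMap.comp_apply, LinearMap.id_apply, hb, gB l h1 h2,
        fB (N + 1 - l) (by omega) (by omega), show N + 1 - (N + 1 - l) = l by omega]
  have hgf : ∀ x : L, gL (fL x) = x := fun x => by
    rw [← LinearMap.comp_apply, hgfc, LinearMap.id_apply]
  have hfg : ∀ y : L', fL (gL y) = y := fun y => by
    rw [← LinearMap.comp_apply, hfgc, LinearMap.id_apply]
  refine ⟨{ toLinearMap := fL, map_lie' := fun {x y} => key x y, invFun := gL,
            left_inv := hgf, right_inv := hfg }, ?_, ?_⟩
  · intro a b h1 h2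
    exact ⟨fJ a b h1 h2, fM a b h1 h2⟩
  · intro l h1 h2
    exact fB l h1 h2
end
end
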